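/- arXiv:1009.6105 — 2 statements merged into one kernel-verified Lean document; each statement's English description precedes it below -/
import Mathlib

section
/- Let Σ = (0,∞], a, b ∈ ℕ with a, b > 1, c > 0, and fix an infinite word z over Σ with z_k ≠ ∞ for all k ∈ ω_b, k ≥ 2. Let Σ_{b,c}^∞ = { y ∈ Σ^∞ : l(y) ≥ 2, y₁ = c, and y_k = ∞ for all k ∉ ω_b with 2 ≤ k ≤ l(y) }. Then the mapping Θ defined by Θ(x)₁ = c, Θ(x)_k = ∞ for k ∉ ω_b with 2 ≤ k ≤ l(x)+1, and Θ(x)_k = a·x_{k/b} + z_k for k ∈ ω_b with k/b ≤ l(x), satisfies p_B(Θ(x), Θ(y)) ≤ (1/2)·p_B(x,y) for all x, y ∈ Σ_{b,c}^∞, and has a unique fixed point v ∈ Σ_{b,c}^∞, which is an infinite word. -/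
open scoped NNReal ENNReal

/-- A nonempty finite or infinite word over an alphabet `α`: letters are indexed
from `1`, the domain of defined letters is an initial segment. -/
structure PWord (α : Type*) where
  toFun : ℕ → Option α
  map_zero' : toFun 0 = none
  map_one' : (toFun 1).isSome = true
  mono' : ∀ n, 1 ≤ n → (toFun (n + 1)).isSome = true → (toFun n).isSome = true

/-- The length `l(x) ∈ [1,∞]` of a word. -/
noncomputable def PWord.len {α : Type*} (x : PWord α) : ℕ∞ :=
  ⨆ n ∈ {n : ℕ | (x.toFun n).isSome = true}, (n : ℕ∞)

/-- `l(x,y)`: the length of the longest common prefix of `x` and `y`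
(`0` if they have no common prefix). -/
noncomputable def lcp {α : Type*} (x y : PWord α) : ℕ∞ :=
  ⨆ n ∈ {n : ℕ | ∀ k, 1 ≤ k → k ≤ n →
      (x.toFun k).isSome = true ∧ x.toFun k = y.toFun k}, (n : ℕ∞)

/-- `2^{-m}` for `m ∈ ℕ∞`, with `2^{-∞} = 0`. -/
noncomputable def epow (m : ℕ∞) : ℝ≥0 := WithTop.recTopCoe 0 (fun n => 2⁻¹ ^ n) m

/-- The Baire partial metric `p_B(x,y) = 2^{-l(x,y)}`. -/
noncomputable def pB {α : Type*} (x y : PWord α) : ℝ≥0 := epow (lcp x y)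

/-- `ω_b = {bᵏ : k ∈ ℕ₊}`. -/
def omegaB (b : ℕ) : Set ℕ := {n | ∃ k : ℕ, 1 ≤ k ∧ n = b ^ k}

/-- The set `Σ_{b,c}^∞` of words over the alphabet `Σ = (0,∞]` of length at least `2`,
with first letter `c` and letter `∞` at every position `k ∉ ω_b`, `2 ≤ k ≤ l(y)`. -/
def Sbc (b : ℕ) (c : ℝ≥0∞) : Set (PWord ℝ≥0∞) :=
  {y | (∀ k t, y.toFun k = some t → 0 < t) ∧ 2 ≤ y.len ∧ y.toFun 1 = some c ∧
    ∀ k : ℕ, 2 ≤ k → (k : ℕ∞) ≤ y.len → k ∉ omegaB b → y.toFun k = some ⊤}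

/-! Words in `Σ_{b,c}^∞` that agree on their first `n` letters have images under `Θ` that
agree on their first `n + 1` letters: the letter `Θ(x)_k` depends only on `x_{k/b}`, and
`k / b < k` as soon as `b > 1`. Hence `Θ` halves `p_B`, and a fixed point is unique. The fixed
point itself is the infinite word obtained by solving the recursion `v_k = a·v_{k/b} + z_k`. -/

namespace PWord

variable {α : Type*}

@[ext] theorem ext {x y : PWord α} (h : ∀ k, x.toFun k = y.toFun k) : x = y := by
  cases x; cases y; simpa [funext_iff] using h

theorem natCast_le_len {x : PWord α} {n : ℕ} (h : (x.toFun n).isSome) : (n : ℕ∞) ≤ x.len :=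
  le_iSup₂ (f := fun (n : ℕ) (_ : (x.toFun n).isSome = true) => (n : ℕ∞)) n h

theorem len_eq_top {x : PWord α} (h : ∀ n, 1 ≤ n → (x.toFun n).isSome) : x.len = ⊤ :=
  ENat.eq_top_iff_forall_ge.2 fun n =>
    (Nat.cast_le.2 n.le_succ).trans (natCast_le_len (h (n + 1) n.succ_pos))

/-- The infinite word with letters `f 1, f 2, …` (the value `f 0` is ignored). -/
def ofFun (f : ℕ → α) : PWord α where
  toFun k := if k = 0 then none else some (f k)
  map_zero' := rfl
  map_one' := rfl
  mono' n hn _ := by simp [show n ≠ 0 by omega]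

theorem ofFun_toFun {f : ℕ → α} {k : ℕ} (hk : k ≠ 0) : (ofFun f).toFun k = some (f k) :=
  if_neg hk

theorem len_ofFun (f : ℕ → α) : (ofFun f).len = ⊤ :=
  len_eq_top fun _ hn => by simp [ofFun_toFun (Nat.one_le_iff_ne_zero.1 hn)]

def AgreeUpTo (x y : PWord α) (n : ℕ) : Prop :=
  ∀ k, 1 ≤ k → k ≤ n → (x.toFun k).isSome ∧ x.toFun k = y.toFun k

end PWord

open PWord

section Baire

variable {α : Type*} {x y x' y' : PWord α}

theorem natCast_le_lcp_iff {n : ℕ} : (n : ℕ∞) ≤ lcp x y ↔ AgreeUpTo x y n := by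
  constructor
  · intro h k hk1 hkn
    obtain ⟨m, hm, hkm⟩ := lt_biSup_iff.1 <|
      (show ((k - 1 : ℕ) : ℕ∞) < n by exact_mod_cast (show k - 1 < n by omega)).trans_le h
    have : k - 1 < m := by exact_mod_cast hkm
    exact hm k hk1 (by omega)
  · exact le_iSup₂ (f := fun (n : ℕ) (_ : AgreeUpTo x y n) => (n : ℕ∞)) n

theorem eq_of_lcp_eq_top (h : lcp x y = ⊤) : x = y := by
  refine PWord.ext fun k => ?_
  rcases Nat.eq_zero_or_pos k with rfl | hk
  · rw [x.map_zero', y.map_zero']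
  · exact (natCast_le_lcp_iff.1 (h ▸ le_top) k hk le_rfl).2

theorem lcp_add_one_le (h : ∀ n, AgreeUpTo x y n → AgreeUpTo x' y' (n + 1)) :
    lcp x y + 1 ≤ lcp x' y' := by
  refine ENat.forall_natCast_le_iff_le.1 fun m hm => ?_
  rcases m with _ | n
  · exact zero_le
  · have hn : (n : ℕ∞) ≤ lcp x y := by
      rw [Nat.cast_succ] at hm
      exact (ENat.add_le_add_iff_right ENat.one_ne_top).1 hm
    exact natCast_le_lcp_iff.2 (h n (natCast_le_lcp_iff.1 hn))

theorem epow_antitone : Antitone epow := by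
  intro m₁ m₂ h
  induction m₂ using ENat.recTopCoe with
  | top => exact zero_le
  | coe m₂ =>
    lift m₁ to ℕ using ne_top_of_le_ne_top (ENat.natCast_ne_top m₂) h
    exact pow_le_pow_of_le_one zero_le (by norm_num) (by exact_mod_cast h)

theorem epow_add_one (m : ℕ∞) : epow (m + 1) = 2⁻¹ * epow m := by
  induction m using ENat.recTopCoe with
  | top => exact (mul_zero _).symm
  | coe m => exact (pow_succ' _ _).trans rfl

theorem eq_top_of_epow_eq_zero {m : ℕ∞} (h : epow m = 0) : m = ⊤ := by
  induction m using ENat.recTopCoe with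
  | top => rfl
  | coe m => exact absurd h (pow_ne_zero m (by norm_num))

theorem pB_le_half_mul_of_agreeUpTo_succ
    (h : ∀ n, AgreeUpTo x y n → AgreeUpTo x' y' (n + 1)) : pB x' y' ≤ 2⁻¹ * pB x y :=
  epow_add_one (lcp x y) ▸ epow_antitone (lcp_add_one_le h)

theorem eq_of_pB_le_half_mul_self (h : pB x y ≤ 2⁻¹ * pB x y) : x = y := by
  refine eq_of_lcp_eq_top (eq_top_of_epow_eq_zero ?_)
  by_contra hne
  exact (mul_lt_of_lt_one_left (pos_iff_ne_zero.2 hne) (by norm_num)).not_ge h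

end Baire

theorem le_of_mem_omegaB {b k : ℕ} (hk : k ∈ omegaB b) : b ≤ k := by
  obtain ⟨m, hm, rfl⟩ := hk
  exact Nat.le_self_pow (by omega) b

/-- The hypotheses defining `Θ = Θ_{a,b}^z` on `Σ_{b,c}^∞`. -/
structure IsThetaMap (a b : ℕ) (c : ℝ≥0∞) (z : ℕ → ℝ≥0∞) (Θ : PWord ℝ≥0∞ → PWord ℝ≥0∞) :
    Prop where
  apply_one : ∀ x ∈ Sbc b c, (Θ x).toFun 1 = some c
  apply_of_notMem : ∀ x ∈ Sbc b c, ∀ k : ℕ, 2 ≤ k → k ∉ omegaB b → (k : ℕ∞) ≤ x.len + 1 →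
    (Θ x).toFun k = some ⊤
  apply_of_mem : ∀ x ∈ Sbc b c, ∀ k : ℕ, k ∈ omegaB b → ((k / b : ℕ) : ℕ∞) ≤ x.len →
    ∀ t, x.toFun (k / b) = some t → (Θ x).toFun k = some ((a : ℝ≥0∞) * t + z k)

namespace IsThetaMap

variable {a b : ℕ} {c : ℝ≥0∞} {z : ℕ → ℝ≥0∞} {Θ : PWord ℝ≥0∞ → PWord ℝ≥0∞}

theorem agreeUpTo_succ (hΘ : IsThetaMap a b c z Θ) (hb : 1 < b) {x y : PWord ℝ≥0∞}
    (hx : x ∈ Sbc b c) (hy : y ∈ Sbc b c) {n : ℕ} (h : AgreeUpTo x y n) :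
    AgreeUpTo (Θ x) (Θ y) (n + 1) := by
  intro k hk1 hkn
  suffices ∃ t, (Θ x).toFun k = some t ∧ (Θ y).toFun k = some t by
    obtain ⟨t, hxt, hyt⟩ := this
    simp [hxt, hyt]
  rcases (show k = 1 ∨ 2 ≤ k by omega) with rfl | hk2
  · exact ⟨c, hΘ.apply_one x hx, hΘ.apply_one y hy⟩
  by_cases hkb : k ∈ omegaB b
  · have hkb1 : 1 ≤ k / b := (Nat.one_le_div_iff (by omega)).2 (le_of_mem_omegaB hkb)
    have hkbn : k / b ≤ n := by have := Nat.div_lt_self (n := k) (by omega) hb; omega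
    obtain ⟨hsome, heq⟩ := h _ hkb1 hkbn
    obtain ⟨t, ht⟩ := Option.isSome_iff_exists.1 hsome
    exact ⟨_, hΘ.apply_of_mem x hx k hkb (natCast_le_len hsome) t ht,
      hΘ.apply_of_mem y hy k hkb (natCast_le_len (heq ▸ hsome)) t (heq ▸ ht)⟩
  · obtain ⟨hsome, heq⟩ := h (k - 1) (by omega) (by omega)
    have hlen : ∀ w : PWord ℝ≥0∞, (w.toFun (k - 1)).isSome → (k : ℕ∞) ≤ w.len + 1 := by
      intro w hw
      calc (k : ℕ∞) = ((k - 1 : ℕ) : ℕ∞) + 1 := by norm_cast; omega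
        _ ≤ w.len + 1 := by gcongr; exact natCast_le_len hw
    exact ⟨⊤, hΘ.apply_of_notMem x hx k hk2 hkb (hlen x hsome),
      hΘ.apply_of_notMem y hy k hk2 hkb (hlen y (heq ▸ hsome))⟩

theorem pB_apply_le (hΘ : IsThetaMap a b c z Θ) (hb : 1 < b) {x y : PWord ℝ≥0∞}
    (hx : x ∈ Sbc b c) (hy : y ∈ Sbc b c) : pB (Θ x) (Θ y) ≤ 2⁻¹ * pB x y :=
  pB_le_half_mul_of_agreeUpTo_succ fun _ => hΘ.agreeUpTo_succ hb hx hy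

theorem apply_ofFun_eq_self (hΘ : IsThetaMap a b c z Θ) (hb : 1 < b) {f : ℕ → ℝ≥0∞}
    (hf : ofFun f ∈ Sbc b c) (hone : f 1 = c) (hnotMem : ∀ k, 2 ≤ k → k ∉ omegaB b → f k = ⊤)
    (hmem : ∀ k ∈ omegaB b, f k = a * f (k / b) + z k) :
    Θ (ofFun f) = ofFun f := by
  refine PWord.ext fun k => ?_
  rcases (show k = 0 ∨ k = 1 ∨ 2 ≤ k by omega) with rfl | rfl | hk2
  · rw [(Θ _).map_zero', (ofFun f).map_zero']
  · rw [hΘ.apply_one _ hf, ofFun_toFun one_ne_zero, hone]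
  rw [ofFun_toFun (by omega)]
  by_cases hkb : k ∈ omegaB b
  · have hkb0 : k / b ≠ 0 := by
      have := (Nat.one_le_div_iff (by omega)).2 (le_of_mem_omegaB hkb); omega
    rw [hΘ.apply_of_mem _ hf k hkb (by simp [len_ofFun]) _ (ofFun_toFun hkb0), hmem k hkb]
  · rw [hΘ.apply_of_notMem _ hf k hk2 hkb (by simp [len_ofFun]), hnotMem k hk2 hkb]

end IsThetaMap

theorem ofFun_mem_Sbc {b : ℕ} {c : ℝ≥0∞} {f : ℕ → ℝ≥0∞} (hpos : ∀ k, 0 < f k) (hone : f 1 = c)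
    (hnotMem : ∀ k, 2 ≤ k → k ∉ omegaB b → f k = ⊤) : ofFun f ∈ Sbc b c := by
  refine ⟨fun k t ht => ?_, by simp [len_ofFun], by rw [ofFun_toFun one_ne_zero, hone],
    fun k hk2 _ hkb => by rw [ofFun_toFun (by omega), hnotMem k hk2 hkb]⟩
  rcases Nat.eq_zero_or_pos k with rfl | hk
  · simp [(ofFun f).map_zero'] at ht
  · rw [ofFun_toFun hk.ne', Option.some_inj] at ht
    exact ht ▸ hpos k

open Classical in
noncomputable def thetaFixedLetter (a b : ℕ) (c : ℝ≥0∞) (z : ℕ → ℝ≥0∞) (k : ℕ) : ℝ≥0∞ :=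
  if k ≤ 1 then c
  else if 1 < b ∧ k ∈ omegaB b then a * thetaFixedLetter a b c z (k / b) + z k
  else ⊤
termination_by k
decreasing_by exact Nat.div_lt_self (by omega) ‹1 < b ∧ _›.1

section thetaFixedLetter

variable {a b : ℕ} {c : ℝ≥0∞} {z : ℕ → ℝ≥0∞}

theorem thetaFixedLetter_one : thetaFixedLetter a b c z 1 = c := by
  rw [thetaFixedLetter, if_pos le_rfl]

theorem thetaFixedLetter_of_mem (hb : 1 < b) {k : ℕ} (hk : k ∈ omegaB b) :
    thetaFixedLetter a b c z k = a * thetaFixedLetter a b c z (k / b) + z k := by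
  rw [thetaFixedLetter, if_neg (by have := le_of_mem_omegaB hk; omega), if_pos ⟨hb, hk⟩]

theorem thetaFixedLetter_of_notMem {k : ℕ} (hk : 2 ≤ k) (hkb : k ∉ omegaB b) :
    thetaFixedLetter a b c z k = ⊤ := by
  rw [thetaFixedLetter, if_neg (by omega), if_neg (fun h => hkb h.2)]

theorem thetaFixedLetter_pos (hc : 0 < c) (hz : ∀ k, 0 < z k) (k : ℕ) :
    0 < thetaFixedLetter a b c z k := by
  rw [thetaFixedLetter]
  split_ifs
  · exact hc
  · exact (hz k).trans_le le_add_self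
  · exact ENNReal.zero_lt_top

end thetaFixedLetter

theorem baire_stmt11_general (a b : ℕ) (hb : 1 < b)
    (c : ℝ≥0∞) (hc : 0 < c)
    (z : ℕ → ℝ≥0∞) (hz : ∀ k, 0 < z k)
    (Θ : PWord ℝ≥0∞ → PWord ℝ≥0∞)
    (hone : ∀ x ∈ Sbc b c, (Θ x).toFun 1 = some c)
    (hinf : ∀ x ∈ Sbc b c, ∀ k : ℕ, 2 ≤ k → k ∉ omegaB b → (k : ℕ∞) ≤ x.len + 1 →
      (Θ x).toFun k = some ⊤)
    (hrec : ∀ x ∈ Sbc b c, ∀ k : ℕ, k ∈ omegaB b → ((k / b : ℕ) : ℕ∞) ≤ x.len →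
      ∀ t, x.toFun (k / b) = some t → (Θ x).toFun k = some ((a : ℝ≥0∞) * t + z k)) :
    (∀ x ∈ Sbc b c, ∀ y ∈ Sbc b c, pB (Θ x) (Θ y) ≤ 2⁻¹ * pB x y) ∧
      ∃ v ∈ Sbc b c, Θ v = v ∧ v.len = ⊤ ∧ ∀ u ∈ Sbc b c, Θ u = u → u = v := by
  have hΘ : IsThetaMap a b c z Θ := ⟨hone, hinf, hrec⟩
  have hcontr : ∀ x ∈ Sbc b c, ∀ y ∈ Sbc b c, pB (Θ x) (Θ y) ≤ 2⁻¹ * pB x y :=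
    fun x hx y hy => hΘ.pB_apply_le hb hx hy
  set v := ofFun (thetaFixedLetter a b c z)
  have hv : v ∈ Sbc b c :=
    ofFun_mem_Sbc (thetaFixedLetter_pos hc hz) thetaFixedLetter_one
      fun _ => thetaFixedLetter_of_notMem
  have hfix : Θ v = v :=
    hΘ.apply_ofFun_eq_self hb hv thetaFixedLetter_one (fun _ => thetaFixedLetter_of_notMem)
      fun _ => thetaFixedLetter_of_mem hb
  refine ⟨hcontr, v, hv, hfix, len_ofFun _, fun u hu hfixu => ?_⟩
  exact eq_of_pB_le_half_mul_self (by simpa only [hfixu, hfix] using hcontr u hu v hv)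

/-- the mapping `Θ = Θ_{a,b}^z` on `Σ_{b,c}^∞` (defined by
`Θ(x)₁ = c`, `Θ(x)_k = ∞` for `k ∉ ω_b` with `2 ≤ k ≤ l(x)+1`, and
`Θ(x)_k = a·x_{k/b} + z_k` for `k ∈ ω_b` with `k/b ≤ l(x)`) satisfies
`p_B(Θ(x),Θ(y)) ≤ (1/2) p_B(x,y)` and has a unique fixed point `v ∈ Σ_{b,c}^∞`,
which is an infinite word. -/
theorem baire_stmt11 (a b : ℕ) (ha : 1 < a) (hb : 1 < b)
    (c : ℝ≥0∞) (hc : 0 < c) (hc' : c ≠ ⊤)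
    (z : ℕ → ℝ≥0∞) (hz : ∀ k, 0 < z k)
    (hz' : ∀ k, k ∈ omegaB b → 2 ≤ k → z k ≠ ⊤)
    (Θ : PWord ℝ≥0∞ → PWord ℝ≥0∞)
    (hmaps : ∀ x ∈ Sbc b c, Θ x ∈ Sbc b c)
    (hone : ∀ x ∈ Sbc b c, (Θ x).toFun 1 = some c)
    (hinf : ∀ x ∈ Sbc b c, ∀ k : ℕ, 2 ≤ k → k ∉ omegaB b → (k : ℕ∞) ≤ x.len + 1 →
      (Θ x).toFun k = some ⊤)
    (hrec : ∀ x ∈ Sbc b c, ∀ k : ℕ, k ∈ omegaB b → ((k / b : ℕ) : ℕ∞) ≤ x.len →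
      ∀ t, x.toFun (k / b) = some t → (Θ x).toFun k = some ((a : ℝ≥0∞) * t + z k)) :
    (∀ x ∈ Sbc b c, ∀ y ∈ Sbc b c, pB (Θ x) (Θ y) ≤ 2⁻¹ * pB x y) ∧
      ∃ v ∈ Sbc b c, Θ v = v ∧ v.len = ⊤ ∧ ∀ u ∈ Sbc b c, Θ u = u → u = v :=
  baire_stmt11_general a b hb c hc z hz Θ hone hinf hrec
end

section
/- Let Σ be an alphabet with a partial order ⪯. For x, y ∈ Σ^∞, let l_⪯(x,y) = sup{ n ∈ ℕ : x_k ⪯ y_k for all k ≤ n } if x₁ ⪯ y₁, and l_⪯(x,y) = 0 otherwise. Then q_B(x,y) = 2^{-l_⪯(x,y)} (with 2^{-∞} = 0) is a partial quasi-metric on Σ^∞. -/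
open scoped NNReal ENNReal

/-- `l_⪯(x,y) = sup{n ∈ ℕ : x_k ⪯ y_k for all k ≤ n}` (and `0` if `x₁ ⋠ y₁`). -/
noncomputable def lcpLe {α : Type*} [PartialOrder α] (x y : PWord α) : ℕ∞ :=
  ⨆ n ∈ {n : ℕ | ∀ k, 1 ≤ k → k ≤ n →
      ∃ s t, x.toFun k = some s ∧ y.toFun k = some t ∧ s ≤ t}, (n : ℕ∞)

/-- The Baire partial quasi-metric `q_B(x,y) = 2^{-l_⪯(x,y)}`. -/
noncomputable def qB {α : Type*} [PartialOrder α] (x y : PWord α) : ℝ≥0 :=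
  epow (lcpLe x y)

/-! Since `m ↦ 2^{-m}` is strictly decreasing, the axioms reduce to facts about `l_⪯`:
`l_⪯(x,y) ≤ l_⪯(x,x)`, `l_⪯(x,y) ≤ l_⪯(y,y)`, and, by transitivity of `⪯`,
`min (l_⪯(x,z)) (l_⪯(z,y)) ≤ l_⪯(x,y)`. So in the triangle inequality `q_B(x,y)` is bounded by the
larger and `q_B(z,z)` by the smaller of `q_B(x,z)`, `q_B(z,y)`. For separation,
`l_⪯(x,x) ≤ l_⪯(x,y)` says that every letter of `x` lies below the corresponding letter of `y`,
and antisymmetry of `⪯` finishes. -/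

theorem ENat.natCast_le_biSup_iff {S : Set ℕ} (h0 : 0 ∈ S) (hS : IsLowerSet S) {n : ℕ} :
    (n : ℕ∞) ≤ ⨆ m ∈ S, (m : ℕ∞) ↔ n ∈ S := by
  cases n with
  | zero => simpa using h0
  | succ k =>
    rw [Nat.cast_succ, ENat.add_one_le_iff (ENat.natCast_ne_top k)]
    simp only [lt_iSup_iff, exists_prop, Nat.cast_lt]
    exact ⟨fun ⟨m, hm, hkm⟩ => hS hkm hm, fun h => ⟨k + 1, h, k.lt_succ_self⟩⟩

theorem epow_strictAnti : StrictAnti epow :=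
  WithTop.strictAnti_iff.mpr
    ⟨fun _ _ h => pow_lt_pow_right_of_lt_one₀ (by norm_num) (by norm_num) h,
      fun n => pow_pos (by norm_num) n⟩

theorem epow_add_epow_le {a b c d : ℕ∞} (hc : min a b ≤ c) (hd : max a b ≤ d) :
    epow c + epow d ≤ epow a + epow b := by
  rcases le_total a b with hab | hba
  · rw [min_eq_left hab] at hc
    rw [max_eq_right hab] at hd
    exact add_le_add (epow_strictAnti.antitone hc) (epow_strictAnti.antitone hd)
  · rw [min_eq_right hba] at hc
    rw [max_eq_left hba] at hd
    rw [add_comm (epow a)]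
    exact add_le_add (epow_strictAnti.antitone hc) (epow_strictAnti.antitone hd)

namespace PWord

variable {α : Type*}

theorem toFun_injective : Function.Injective (toFun : PWord α → ℕ → Option α) := by
  rintro ⟨⟩ ⟨⟩ h
  congr

theorem isSome_of_le (w : PWord α) {j k : ℕ} (hj : 1 ≤ j) (hjk : j ≤ k)
    (hk : (w.toFun k).isSome = true) : (w.toFun j).isSome = true := by
  induction k, hjk using Nat.le_induction with
  | base => exact hk
  | succ k hjk ih => exact ih (w.mono' k (hj.trans hjk) hk)

theorem eq_of_letterwise_le [PartialOrder α] {x y : PWord α}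
    (hxy : ∀ k s, x.toFun k = some s → ∃ t, y.toFun k = some t ∧ s ≤ t)
    (hyx : ∀ k t, y.toFun k = some t → ∃ s, x.toFun k = some s ∧ t ≤ s) : x = y := by
  refine toFun_injective (funext fun k => ?_)
  cases hx : x.toFun k with
  | none =>
    cases hy : y.toFun k with
    | none => rfl
    | some t =>
      obtain ⟨s, hs, -⟩ := hyx k t hy
      simp [hx] at hs
  | some s =>
    obtain ⟨t, hy, hst⟩ := hxy k s hx
    obtain ⟨s', hs', hts'⟩ := hyx k t hy
    obtain rfl : s' = s := Option.some_inj.mp (hs'.symm.trans hx)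
    rw [hy, le_antisymm hst hts']

end PWord

section lcpLe

variable {α : Type*} [PartialOrder α]

theorem natCast_le_lcpLe_iff {x y : PWord α} {n : ℕ} :
    (n : ℕ∞) ≤ lcpLe x y ↔
      ∀ k, 1 ≤ k → k ≤ n → ∃ s t, x.toFun k = some s ∧ y.toFun k = some t ∧ s ≤ t := by
  refine ENat.natCast_le_biSup_iff (fun _ hk hk0 => by omega) ?_
  exact fun _ _ hmn hn k hk hkm => hn k hk (hkm.trans hmn)

theorem lcpLe_le_lcpLe_left (x y : PWord α) : lcpLe x y ≤ lcpLe x x := by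
  refine ENat.forall_natCast_le_iff_le.mp fun n hn => ?_
  rw [natCast_le_lcpLe_iff] at hn ⊢
  intro k hk hkn
  obtain ⟨s, -, hs, -⟩ := hn k hk hkn
  exact ⟨s, s, hs, hs, le_rfl⟩

theorem lcpLe_le_lcpLe_right (x y : PWord α) : lcpLe x y ≤ lcpLe y y := by
  refine ENat.forall_natCast_le_iff_le.mp fun n hn => ?_
  rw [natCast_le_lcpLe_iff] at hn ⊢
  intro k hk hkn
  obtain ⟨-, t, -, ht, -⟩ := hn k hk hkn
  exact ⟨t, t, ht, ht, le_rfl⟩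

theorem min_lcpLe_le_lcpLe (x y z : PWord α) : min (lcpLe x z) (lcpLe z y) ≤ lcpLe x y := by
  refine ENat.forall_natCast_le_iff_le.mp fun n hn => ?_
  have hxz := natCast_le_lcpLe_iff.mp (hn.trans (min_le_left _ _))
  have hzy := natCast_le_lcpLe_iff.mp (hn.trans (min_le_right _ _))
  refine natCast_le_lcpLe_iff.mpr fun k hk hkn => ?_
  obtain ⟨s, t, hs, ht, hst⟩ := hxz k hk hkn
  obtain ⟨t', u, ht', hu, htu⟩ := hzy k hk hkn
  obtain rfl : t' = t := Option.some_inj.mp (ht'.symm.trans ht)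
  exact ⟨s, u, hs, hu, hst.trans htu⟩

theorem natCast_le_lcpLe_self {w : PWord α} {k : ℕ} (hk : (w.toFun k).isSome = true) :
    (k : ℕ∞) ≤ lcpLe w w := by
  refine natCast_le_lcpLe_iff.mpr fun j hj hjk => ?_
  obtain ⟨s, hs⟩ := Option.isSome_iff_exists.mp (w.isSome_of_le hj hjk hk)
  exact ⟨s, s, hs, hs, le_rfl⟩

theorem letterwise_le_of_lcpLe_self_le {x y : PWord α} (h : lcpLe x x ≤ lcpLe x y) :
    ∀ k s, x.toFun k = some s → ∃ t, y.toFun k = some t ∧ s ≤ t := by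
  intro k s hs
  have hk : 1 ≤ k := Nat.one_le_iff_ne_zero.mpr fun h0 => by simp [h0, x.map_zero'] at hs
  obtain ⟨s', t, hs', ht, hst⟩ :=
    natCast_le_lcpLe_iff.mp ((natCast_le_lcpLe_self (by simp [hs])).trans h) k hk le_rfl
  obtain rfl : s' = s := Option.some_inj.mp (hs'.symm.trans hs)
  exact ⟨t, ht, hst⟩

end lcpLe

theorem baire_stmt15_general {α : Type*} [PartialOrder α] :
    (∀ x y : PWord α, qB x x ≤ qB x y) ∧
      (∀ x y : PWord α, qB x x ≤ qB y x) ∧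
      (∀ x y z : PWord α, qB x y + qB z z ≤ qB x z + qB z y) ∧
      (∀ x y : PWord α, (qB x x = qB x y ∧ qB y y = qB y x) ↔ x = y) := by
  refine ⟨fun x y => epow_strictAnti.antitone (lcpLe_le_lcpLe_left x y),
    fun x y => epow_strictAnti.antitone (lcpLe_le_lcpLe_right y x),
    fun x y z => epow_add_epow_le (min_lcpLe_le_lcpLe x y z)
      (max_le (lcpLe_le_lcpLe_right x z) (lcpLe_le_lcpLe_left z y)),
    fun x y => ⟨fun ⟨hx, hy⟩ => ?_, by rintro rfl; exact ⟨rfl, rfl⟩⟩⟩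
  exact PWord.eq_of_letterwise_le
    (letterwise_le_of_lcpLe_self_le (epow_strictAnti.injective hx).le)
    (letterwise_le_of_lcpLe_self_le (epow_strictAnti.injective hy).le)

/-- `q_B(x,y) = 2^{-l_⪯(x,y)}` is a partial quasi-metric on `Σ^∞`. -/
theorem baire_stmt15 {α : Type*} [Nonempty α] [PartialOrder α] :
    (∀ x y : PWord α, qB x x ≤ qB x y) ∧
      (∀ x y : PWord α, qB x x ≤ qB y x) ∧
      (∀ x y z : PWord α, qB x y + qB z z ≤ qB x z + qB z y) ∧
      (∀ x y : PWord α, (qB x x = qB x y ∧ qB y y = qB y x) ↔ x = y) :=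
  baire_stmt15_general
end
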